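/- arXiv:2511.19241 — 4 statements merged into one kernel-verified Lean document; each statement's English description precedes it below -/
import Mathlib

section
/- Let X be a set, k : X → X → ℝ a symmetric positive semidefinite kernel, γ > 0, and Z₁,…,Z_L finite tuples of points of X. If x' ∈ X satisfies k(x',x') = 0, then s(x',Zₗ) = 0 for every l, and the LES acquisition function satisfies α(x') = 0. -/
open Matrix

/-- A kernel `k : X → X → ℝ` is (symmetric) positive semidefinite. -/
def IsPSDKernel {X : Type*} (k : X → X → ℝ) : Prop :=
  (∀ x y, k x y = k y x) ∧
  ∀ (n : ℕ) (x : Fin n → X) (c : Fin n → ℝ),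
    0 ≤ ∑ i, ∑ j, c i * c j * k (x i) (x j)

/-- Gram matrix `K(Z)ᵢⱼ = k(zᵢ, zⱼ)` of a kernel at a finite tuple of points. -/
noncomputable def gramMatrix {X : Type*} (k : X → X → ℝ) {m : ℕ} (Z : Fin m → X) :
    Matrix (Fin m) (Fin m) ℝ :=
  fun i j => k (Z i) (Z j)

/-- Covariance vector `v(x,Z)ᵢ = k(x, zᵢ)` between a query point and a tuple of points. -/
noncomputable def covVec {X : Type*} (k : X → X → ℝ) {m : ℕ} (x : X) (Z : Fin m → X) :
    Fin m → ℝ :=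
  fun i => k x (Z i)

/-- Conditional (posterior) variance
`s(x,Z) = k(x,x) − v(x,Z)ᵀ (K(Z) + γ²I)⁻¹ v(x,Z)`. -/
noncomputable def condVar {X : Type*} (k : X → X → ℝ) (γ : ℝ) {m : ℕ}
    (x : X) (Z : Fin m → X) : ℝ :=
  k x x -
    covVec k x Z ⬝ᵥ ((gramMatrix k Z + γ ^ 2 • (1 : Matrix (Fin m) (Fin m) ℝ))⁻¹ *ᵥ covVec k x Z)

/-- The LES acquisition function
`α(x) = ½ log(2πe(k(x,x)+γ²)) − (1/L) ∑ₗ ½ log(2πe(s(x,Zₗ)+γ²))`. -/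
noncomputable def lesAcq {X : Type*} (k : X → X → ℝ) (γ : ℝ) {L : ℕ} {m : Fin L → ℕ}
    (Z : (l : Fin L) → Fin (m l) → X) (x : X) : ℝ :=
  (1 / 2) * Real.log (2 * Real.pi * Real.exp 1 * (k x x + γ ^ 2)) -
    (1 / (L : ℝ)) *
      ∑ l, (1 / 2) * Real.log (2 * Real.pi * Real.exp 1 * (condVar k γ x (Z l) + γ ^ 2))

lemma kernel_zero_of_diag_zero {X : Type*} (k : X → X → ℝ) (hk : IsPSDKernel k)
    (x' : X) (hx' : k x' x' = 0) (y : X) : k x' y = 0 := by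
  by_contra h
  set a := k x' y with ha
  have hyy : 0 ≤ k y y := by
    have := hk.2 1 (fun _ => y) (fun _ => 1)
    simpa using this
  set t : ℝ := -(k y y + 1) / (2 * a) with ht
  have h2 := hk.2 2 ![x', y] ![t, 1]
  have hsym := hk.1 y x'
  simp [Fin.sum_univ_two, hx', hsym, ← ha] at h2
  have key : 0 ≤ 2 * t * a + k y y := by nlinarith [h2]
  have hta : 2 * t * a = -(k y y + 1) := by
    field_simp [ht]
    rw [ht, mul_div_assoc', div_mul_eq_mul_div, div_eq_iff (mul_ne_zero two_ne_zero h)]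
    ring
  rw [hta] at key
  linarith

/-- If `k(x',x') = 0` then every conditional variance `s(x',Zₗ)` vanishes
and the LES acquisition function satisfies `α(x') = 0`. -/
theorem lesAcq_eq_zero_of_zero_variance {X : Type*} (k : X → X → ℝ) (hk : IsPSDKernel k)
    (γ : ℝ) (hγ : 0 < γ) {L : ℕ} (hL : 0 < L) {m : Fin L → ℕ}
    (Z : (l : Fin L) → Fin (m l) → X) (x' : X) (hx' : k x' x' = 0) :
    (∀ l, condVar k γ x' (Z l) = 0) ∧ lesAcq k γ Z x' = 0 := by
  have hc : ∀ l, condVar k γ x' (Z l) = 0 := by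
    intro l
    have hv : covVec k x' (Z l) = 0 := by
      funext i
      exact kernel_zero_of_diag_zero k hk x' hx' (Z l i)
    simp [condVar, hv, hx']
  refine ⟨hc, ?_⟩
  have hLne : (L : ℝ) ≠ 0 := Nat.cast_ne_zero.mpr hL.ne'
  simp only [lesAcq, hx', hc, zero_add]
  rw [Finset.sum_const, Finset.card_univ, Fintype.card_fin, nsmul_eq_mul]
  field_simp
  ring
end

section
/- Let X be a set, k : X → X → ℝ a symmetric positive semidefinite kernel, γ > 0, and Z₁,…,Z_L finite tuples of points of X. If x ∈ X satisfies k(x,x) > 0 and the covariance vector v(x,Zₗ) is nonzero for every l ∈ {1,…,L}, then s(x,Zₗ) < k(x,x) for every l and the LES acquisition function satisfies α(x) > 0. -/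
open Matrix

lemma gram_posSemidef {X : Type*} (k : X → X → ℝ) (hk : IsPSDKernel k) {m : ℕ}
    (Z : Fin m → X) : (gramMatrix k Z).PosSemidef := by
  rw [Matrix.posSemidef_iff_dotProduct_mulVec]
  constructor
  · ext i j
    simp [gramMatrix, Matrix.conjTranspose, hk.1 (Z i) (Z j)]
  · intro c
    have := hk.2 m Z c
    simpa [dotProduct, Matrix.mulVec, gramMatrix, Finset.mul_sum, mul_comm,
      mul_assoc, mul_left_comm] using this

lemma reg_posDef {X : Type*} (k : X → X → ℝ) (hk : IsPSDKernel k) {γ : ℝ} (hγ : 0 < γ)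
    {m : ℕ} (Z : Fin m → X) :
    (gramMatrix k Z + γ ^ 2 • (1 : Matrix (Fin m) (Fin m) ℝ)).PosDef := by
  refine Matrix.PosDef.posSemidef_add (gram_posSemidef k hk Z) ?_
  rw [Matrix.posDef_iff_dotProduct_mulVec]
  constructor
  · simp [Matrix.IsHermitian, Matrix.conjTranspose]
    ext i j
    simp [Matrix.map_apply]
  · intro c hc
    have h1 : star c ⬝ᵥ ((γ ^ 2 • (1 : Matrix (Fin m) (Fin m) ℝ)) *ᵥ c) = γ ^ 2 * (c ⬝ᵥ c) := by
      simp [Matrix.smul_mulVec, dotProduct_smul]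
    rw [h1]
    have : 0 < c ⬝ᵥ c := by
      have := Matrix.dotProduct_star_self_pos_iff (v := c) |>.mpr hc
      simpa using this
    positivity

lemma condVar_bounds {X : Type*} (k : X → X → ℝ) (hk : IsPSDKernel k) {γ : ℝ} (hγ : 0 < γ)
    {m : ℕ} (x : X) (Z : Fin m → X) (hv : covVec k x Z ≠ 0) :
    0 ≤ condVar k γ x Z ∧ condVar k γ x Z < k x x := by
  set A := gramMatrix k Z + γ ^ 2 • (1 : Matrix (Fin m) (Fin m) ℝ) with hAdef
  set v := covVec k x Z with hvdef
  set w := A⁻¹ *ᵥ v with hwdef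
  have hA : A.PosDef := reg_posDef k hk hγ Z
  have hAw : A *ᵥ w = v := by
    rw [hwdef, Matrix.mulVec_mulVec, Matrix.mul_nonsing_inv _ hA.det_pos.ne'.isUnit,
      Matrix.one_mulVec]
  have hvw_pos : 0 < v ⬝ᵥ w := by
    have := hA.inv.dotProduct_mulVec_pos hv
    simpa [hwdef] using this
  have hvw_eq : v ⬝ᵥ w = w ⬝ᵥ (gramMatrix k Z *ᵥ w) + γ ^ 2 * (w ⬝ᵥ w) := by
    calc v ⬝ᵥ w = w ⬝ᵥ (A *ᵥ w) := by rw [hAw, dotProduct_comm]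
    _ = w ⬝ᵥ (gramMatrix k Z *ᵥ w) + γ ^ 2 * (w ⬝ᵥ w) := by
        rw [hAdef, Matrix.add_mulVec, dotProduct_add, Matrix.smul_mulVec,
          Matrix.one_mulVec, dotProduct_smul, smul_eq_mul]
  have key : 0 ≤ k x x - 2 * (v ⬝ᵥ w) + w ⬝ᵥ (gramMatrix k Z *ᵥ w) := by
    have h0 := hk.2 (m + 1) (Fin.cons x Z) (Fin.cons 1 (-w))
    refine le_trans h0 (le_of_eq ?_)
    simp only [Fin.sum_univ_succ, Fin.cons_zero, Fin.cons_succ, Pi.neg_apply,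
      dotProduct, Matrix.mulVec, gramMatrix, covVec, hvdef]
    rw [Finset.sum_add_distrib]
    have hsym : ∀ i, k (Z i) x = k x (Z i) := fun i => hk.1 _ _
    simp only [hsym]
    have hD : (∑ i, ∑ j, (-w i) * (-w j) * k (Z i) (Z j))
        = ∑ i, w i * ∑ j, k (Z i) (Z j) * w j := by
      refine Finset.sum_congr rfl fun i _ => ?_
      rw [Finset.mul_sum]
      exact Finset.sum_congr rfl fun j _ => by ring
    rw [hD]
    have hS1 : (∑ i, (-w i) * 1 * k x (Z i)) = -∑ i, w i * k x (Z i) := by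
      rw [← Finset.sum_neg_distrib]
      exact Finset.sum_congr rfl fun i _ => by ring
    have hS2 : (∑ j, 1 * (-w j) * k x (Z j)) = -∑ i, w i * k x (Z i) := by
      rw [← Finset.sum_neg_distrib]
      exact Finset.sum_congr rfl fun i _ => by ring
    rw [hS1, hS2,
      show (∑ i, w i * k x (Z i)) = ∑ i, k x (Z i) * w i from
        Finset.sum_congr rfl fun i _ => mul_comm _ _]
    ring
  have hcv : condVar k γ x Z = k x x - v ⬝ᵥ w := rfl
  constructor
  · rw [hcv]
    nlinarith [key, hvw_eq, sq_nonneg γ,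
      (by simpa using dotProduct_star_self_nonneg w : (0:ℝ) ≤ w ⬝ᵥ w)]
  · rw [hcv]; linarith

/-- If `k(x,x) > 0` and the covariance vector `v(x,Zₗ)` is nonzero for
every `l`, then `s(x,Zₗ) < k(x,x)` for every `l` and `α(x) > 0`. -/
theorem lesAcq_pos_of_pos_variance {X : Type*} (k : X → X → ℝ) (hk : IsPSDKernel k)
    (γ : ℝ) (hγ : 0 < γ) {L : ℕ} (hL : 0 < L) {m : Fin L → ℕ}
    (Z : (l : Fin L) → Fin (m l) → X) (x : X) (hx : 0 < k x x)
    (hv : ∀ l, covVec k x (Z l) ≠ 0) :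
    (∀ l, condVar k γ x (Z l) < k x x) ∧ 0 < lesAcq k γ Z x := by
  have hb : ∀ l, 0 ≤ condVar k γ x (Z l) ∧ condVar k γ x (Z l) < k x x :=
    fun l => condVar_bounds k hk hγ x (Z l) (hv l)
  refine ⟨fun l => (hb l).2, ?_⟩
  have hπ : (0:ℝ) < 2 * Real.pi * Real.exp 1 := by positivity
  set B := (1 / 2) * Real.log (2 * Real.pi * Real.exp 1 * (k x x + γ ^ 2)) with hBdef
  have hterm : ∀ l, (1 / 2) * Real.log (2 * Real.pi * Real.exp 1 *
      (condVar k γ x (Z l) + γ ^ 2)) < B := by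
    intro l
    have h1 : (0:ℝ) < condVar k γ x (Z l) + γ ^ 2 := by nlinarith [(hb l).1]
    have h2 : condVar k γ x (Z l) + γ ^ 2 < k x x + γ ^ 2 := by linarith [(hb l).2]
    have := Real.log_lt_log (by positivity) (by nlinarith : 2 * Real.pi * Real.exp 1 *
      (condVar k γ x (Z l) + γ ^ 2) < 2 * Real.pi * Real.exp 1 * (k x x + γ ^ 2))
    linarith
  have hne : (Finset.univ : Finset (Fin L)).Nonempty := by
    haveI : NeZero L := ⟨hL.ne'⟩
    exact Finset.univ_nonempty
  have hsum : (∑ l, (1 / 2) * Real.log (2 * Real.pi * Real.exp 1 *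
      (condVar k γ x (Z l) + γ ^ 2))) < ∑ _l : Fin L, B :=
    Finset.sum_lt_sum_of_nonempty hne fun l _ => hterm l
  rw [Finset.sum_const, Finset.card_univ, Fintype.card_fin, nsmul_eq_mul] at hsum
  have hLpos : (0:ℝ) < (L:ℝ) := Nat.cast_pos.mpr hL
  have : (1 / (L : ℝ)) * ∑ l, (1 / 2) * Real.log (2 * Real.pi * Real.exp 1 *
      (condVar k γ x (Z l) + γ ^ 2)) < (1 / (L : ℝ)) * ((L:ℝ) * B) := by
    exact mul_lt_mul_of_pos_left hsum (by positivity)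
  rw [← mul_assoc, one_div, inv_mul_cancel₀ hLpos.ne', one_mul] at this
  unfold lesAcq
  simp only [one_div]
  linarith
end

section
/- Let d ≥ 1, η > 0, N ≥ 1, and let x₀, x₁, …, x_N ∈ ℝᵈ be points such that x₀, …, x_{N−1} are pairwise distinct. Then there exists an infinitely differentiable function f : ℝᵈ → ℝ whose gradient ∇f is Lipschitz, such that the gradient-descent iterates from x₀ with step size η are exactly the prescribed sequence: setting z₀ = x₀ and z_{t+1} = z_t − η∇f(z_t), one has z_t = x_t for all t = 0, …, N. -/
open Metric InnerProductSpace Finset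
open scoped RealInnerProductSpace ContDiff

/-- A function that is bounded and Lipschitz (with some constants). -/
def NiceBL {α : Type*} [PseudoMetricSpace α] (h : α → ℝ) : Prop :=
  ∃ M L : ℝ, 0 ≤ M ∧ 0 ≤ L ∧ (∀ y, |h y| ≤ M) ∧ ∀ a b, |h a - h b| ≤ L * dist a b

section NiceBL
variable {α : Type*} [PseudoMetricSpace α]

lemma niceBL_const (c : ℝ) : NiceBL (fun _ : α => c) :=
  ⟨|c|, 0, abs_nonneg c, le_rfl, fun _ => le_rfl, fun a b => by simp⟩

lemma NiceBL.mul {g h : α → ℝ} (hg : NiceBL g) (hh : NiceBL h) :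
    NiceBL (fun y => g y * h y) := by
  obtain ⟨M₁, L₁, hM₁, hL₁, hb₁, hl₁⟩ := hg
  obtain ⟨M₂, L₂, hM₂, hL₂, hb₂, hl₂⟩ := hh
  refine ⟨M₁ * M₂, M₁ * L₂ + M₂ * L₁, by positivity, by positivity, ?_, ?_⟩
  · intro y
    rw [abs_mul]
    exact mul_le_mul (hb₁ y) (hb₂ y) (abs_nonneg _) hM₁
  · intro a b
    have key : g a * h a - g b * h b = g a * (h a - h b) + h b * (g a - g b) := by ring
    calc |g a * h a - g b * h b| ≤ |g a * (h a - h b)| + |h b * (g a - g b)| := by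
          rw [key]; exact abs_add_le _ _
      _ = |g a| * |h a - h b| + |h b| * |g a - g b| := by rw [abs_mul, abs_mul]
      _ ≤ M₁ * (L₂ * dist a b) + M₂ * (L₁ * dist a b) := by
          have d0 : (0:ℝ) ≤ dist a b := dist_nonneg
          have e1 := mul_le_mul (hb₁ a) (hl₂ a b) (abs_nonneg _) hM₁
          have e2 := mul_le_mul (hb₂ b) (hl₁ a b) (abs_nonneg _) hM₂
          linarith
      _ = (M₁ * L₂ + M₂ * L₁) * dist a b := by ring

lemma NiceBL.add {g h : α → ℝ} (hg : NiceBL g) (hh : NiceBL h) :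
    NiceBL (fun y => g y + h y) := by
  obtain ⟨M₁, L₁, hM₁, hL₁, hb₁, hl₁⟩ := hg
  obtain ⟨M₂, L₂, hM₂, hL₂, hb₂, hl₂⟩ := hh
  refine ⟨M₁ + M₂, L₁ + L₂, by positivity, by positivity, ?_, ?_⟩
  · intro y
    calc |g y + h y| ≤ |g y| + |h y| := abs_add_le _ _
      _ ≤ M₁ + M₂ := add_le_add (hb₁ y) (hb₂ y)
  · intro a b
    calc |g a + h a - (g b + h b)| = |(g a - g b) + (h a - h b)| := by ring_nf
      _ ≤ |g a - g b| + |h a - h b| := abs_add_le _ _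
      _ ≤ L₁ * dist a b + L₂ * dist a b := add_le_add (hl₁ a b) (hl₂ a b)
      _ = (L₁ + L₂) * dist a b := by ring

lemma niceBL_sum {ι : Type*} (s : Finset ι) (h : ι → α → ℝ)
    (hh : ∀ i ∈ s, NiceBL (h i)) : NiceBL (fun y => ∑ i ∈ s, h i y) := by
  classical
  induction s using Finset.induction with
  | empty => simpa using niceBL_const 0
  | insert a s hnot ih =>
    simp only [Finset.sum_insert hnot]
    exact (hh a (Finset.mem_insert_self a s)).add
      (ih fun i hi => hh i (Finset.mem_insert_of_mem hi))

lemma niceBL_prod {ι : Type*} (s : Finset ι) (h : ι → α → ℝ)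
    (hh : ∀ i ∈ s, NiceBL (h i)) : NiceBL (fun y => ∏ i ∈ s, h i y) := by
  classical
  induction s using Finset.induction with
  | empty => simpa using niceBL_const 1
  | insert a s hnot ih =>
    simp only [Finset.prod_insert hnot]
    exact (hh a (Finset.mem_insert_self a s)).mul
      (ih fun i hi => hh i (Finset.mem_insert_of_mem hi))

lemma NiceBL.comp_lip {β : Type*} [PseudoMetricSpace β] {g : β → ℝ} (hg : NiceBL g)
    (φ : α → β) (K : ℝ) (hK : 0 ≤ K) (hφ : ∀ a b, dist (φ a) (φ b) ≤ K * dist a b) :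
    NiceBL (fun y => g (φ y)) := by
  obtain ⟨M, L, hM, hL, hb, hl⟩ := hg
  refine ⟨M, L * K, hM, by positivity, fun y => hb _, fun a b => ?_⟩
  calc |g (φ a) - g (φ b)| ≤ L * dist (φ a) (φ b) := hl _ _
    _ ≤ L * (K * dist a b) := by
        exact mul_le_mul_of_nonneg_left (hφ a b) hL
    _ = L * K * dist a b := by ring

lemma lipschitz_sin : ∀ a b : ℝ, |Real.sin a - Real.sin b| ≤ 1 * dist a b := by
  have h : LipschitzWith 1 Real.sin := by
    apply lipschitzWith_of_nnnorm_deriv_le Real.differentiable_sin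
    intro x
    rw [Real.deriv_sin]
    simp [← NNReal.coe_le_coe, abs_le]
    exact ⟨Real.neg_one_le_cos x, Real.cos_le_one x⟩
  intro a b
  have := h.dist_le_mul a b
  simpa [Real.dist_eq] using this

lemma lipschitz_cos : ∀ a b : ℝ, |Real.cos a - Real.cos b| ≤ 1 * dist a b := by
  have h : LipschitzWith 1 Real.cos := by
    apply lipschitzWith_of_nnnorm_deriv_le Real.differentiable_cos
    intro x
    rw [Real.deriv_cos']
    simp only [Pi.neg_apply]
    simp [← NNReal.coe_le_coe, abs_le]
    constructor <;> nlinarith [Real.neg_one_le_sin x, Real.sin_le_one x]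
  intro a b
  have := h.dist_le_mul a b
  simpa [Real.dist_eq] using this

lemma niceBL_sin : NiceBL Real.sin :=
  ⟨1, 1, zero_le_one, zero_le_one, fun y => Real.abs_sin_le_one y, lipschitz_sin⟩

lemma niceBL_cos : NiceBL Real.cos :=
  ⟨1, 1, zero_le_one, zero_le_one, fun y => Real.abs_cos_le_one y, lipschitz_cos⟩

end NiceBL

open Metric Finset
open scoped ContDiff

noncomputable section

/-- Product of sines vanishing (to second order after squaring) at prescribed nodes. -/
def hermP (N : ℕ) (a : ℕ → ℝ) (s : ℕ) (τ : ℝ) : ℝ :=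
  ∏ t ∈ (Finset.range N).erase s, Real.sin ((τ - a t) / 2)

/-- Derivative of `hermP`. -/
def hermP' (N : ℕ) (a : ℕ → ℝ) (s : ℕ) (τ : ℝ) : ℝ :=
  ∑ t ∈ (Finset.range N).erase s,
    (∏ r ∈ ((Finset.range N).erase s).erase t, Real.sin ((τ - a r) / 2)) •
      (Real.cos ((τ - a t) / 2) * (1 / 2))

/-- Hermite-type basis function: equals 1 at `a s`, vanishes to second order at other nodes. -/
def hermT (N : ℕ) (a : ℕ → ℝ) (s : ℕ) (τ : ℝ) : ℝ :=
  ((hermP N a s (a s))⁻¹ * hermP N a s τ) ^ 2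

/-- Derivative of `hermT`. -/
def hermT' (N : ℕ) (a : ℕ → ℝ) (s : ℕ) (τ : ℝ) : ℝ :=
  (2 : ℝ) * ((hermP N a s (a s))⁻¹ * hermP N a s τ) ^ 1 *
    ((hermP N a s (a s))⁻¹ * hermP' N a s τ)

variable {N : ℕ} {a : ℕ → ℝ} {s : ℕ}

lemma sin_node_hasDerivAt (c τ : ℝ) :
    HasDerivAt (fun τ => Real.sin ((τ - c) / 2)) (Real.cos ((τ - c) / 2) * (1 / 2)) τ := by
  have h1 : HasDerivAt (fun τ : ℝ => (τ - c) / 2) (1 / 2) τ := by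
    simpa using ((hasDerivAt_id τ).sub_const c).div_const 2
  simpa [Function.comp_def] using (Real.hasDerivAt_sin ((τ - c) / 2)).comp τ h1

lemma hermP_hasDerivAt (τ : ℝ) : HasDerivAt (hermP N a s) (hermP' N a s τ) τ := by
  have := HasDerivAt.fun_finset_prod (u := (Finset.range N).erase s)
    (f := fun t τ => Real.sin ((τ - a t) / 2))
    (f' := fun t => Real.cos ((τ - a t) / 2) * (1 / 2))
    (fun t _ => sin_node_hasDerivAt (a t) τ)
  exact this

lemma hermT_hasDerivAt (τ : ℝ) : HasDerivAt (hermT N a s) (hermT' N a s τ) τ := by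
  have h1 : HasDerivAt (fun τ => (hermP N a s (a s))⁻¹ * hermP N a s τ)
      ((hermP N a s (a s))⁻¹ * hermP' N a s τ) τ := (hermP_hasDerivAt τ).const_mul _
  show HasDerivAt (fun τ => hermT N a s τ) _ τ
  simpa [hermT, hermT'] using h1.fun_pow 2

lemma hermP_eq_zero (ht : t ∈ (Finset.range N).erase s) : hermP N a s (a t) = 0 :=
  Finset.prod_eq_zero ht (by simp)

lemma hermT_eq_zero (ht : t ∈ (Finset.range N).erase s) : hermT N a s (a t) = 0 := by
  simp [hermT, hermP_eq_zero ht]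

lemma hermT'_eq_zero (ht : t ∈ (Finset.range N).erase s) : hermT' N a s (a t) = 0 := by
  simp [hermT', hermP_eq_zero ht]

lemma hermT_self (hP : hermP N a s (a s) ≠ 0) : hermT N a s (a s) = 1 := by
  simp [hermT, inv_mul_cancel₀ hP]

end

noncomputable section
open Metric Finset
open scoped ContDiff

lemma lip_node (c : ℝ) : ∀ p q : ℝ, dist ((p - c) / 2) ((q - c) / 2) ≤ (1/2) * dist p q := by
  intro p q
  rw [Real.dist_eq, Real.dist_eq]
  have : (p - c) / 2 - (q - c) / 2 = (p - q) / 2 := by ring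
  rw [this, abs_div]
  simp [abs_of_nonneg]
  linarith [abs_nonneg (p - q)]

lemma niceBL_sin_node (c : ℝ) : NiceBL (fun τ : ℝ => Real.sin ((τ - c) / 2)) :=
  niceBL_sin.comp_lip (fun τ => (τ - c) / 2) (1/2) (by norm_num) (lip_node c)

lemma niceBL_cos_node (c : ℝ) : NiceBL (fun τ : ℝ => Real.cos ((τ - c) / 2)) :=
  niceBL_cos.comp_lip (fun τ => (τ - c) / 2) (1/2) (by norm_num) (lip_node c)

variable {N : ℕ} {a : ℕ → ℝ} {s : ℕ}

lemma niceBL_hermP : NiceBL (hermP N a s) :=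
  niceBL_prod _ _ (fun t _ => niceBL_sin_node (a t))

lemma niceBL_hermP' : NiceBL (hermP' N a s) := by
  have : NiceBL (fun τ => ∑ t ∈ (Finset.range N).erase s,
      (∏ r ∈ ((Finset.range N).erase s).erase t, Real.sin ((τ - a r) / 2)) *
        (Real.cos ((τ - a t) / 2) * (1 / 2))) :=
    niceBL_sum _ _ (fun t _ =>
      (niceBL_prod _ _ (fun r _ => niceBL_sin_node (a r))).mul
        ((niceBL_cos_node (a t)).mul (niceBL_const _)))
  have hEq : hermP' N a s = fun τ => ∑ t ∈ (Finset.range N).erase s,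
      (∏ r ∈ ((Finset.range N).erase s).erase t, Real.sin ((τ - a r) / 2)) *
        (Real.cos ((τ - a t) / 2) * (1 / 2)) := by
    funext τ; simp [hermP', smul_eq_mul]
  rwa [hEq]

lemma niceBL_hermT : NiceBL (hermT N a s) := by
  have : NiceBL (fun τ => ((hermP N a s (a s))⁻¹ * hermP N a s τ) *
      ((hermP N a s (a s))⁻¹ * hermP N a s τ)) :=
    ((niceBL_const _).mul niceBL_hermP).mul ((niceBL_const _).mul niceBL_hermP)
  have hEq : hermT N a s = fun τ => ((hermP N a s (a s))⁻¹ * hermP N a s τ) *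
      ((hermP N a s (a s))⁻¹ * hermP N a s τ) := by
    funext τ; rw [hermT, sq]
  rwa [hEq]

lemma niceBL_hermT' : NiceBL (hermT' N a s) := by
  have h1 : NiceBL (fun τ => (2:ℝ) * ((hermP N a s (a s))⁻¹ * hermP N a s τ)) :=
    (niceBL_const _).mul ((niceBL_const _).mul niceBL_hermP)
  have h2 : NiceBL (fun τ => ((hermP N a s (a s))⁻¹ * hermP' N a s τ)) :=
    (niceBL_const ((hermP N a s (a s))⁻¹)).mul niceBL_hermP'
  have h3 := h1.mul h2
  have hEq : hermT' N a s = fun τ => ((2:ℝ) * ((hermP N a s (a s))⁻¹ * hermP N a s τ)) *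
      ((hermP N a s (a s))⁻¹ * hermP' N a s τ) := by
    funext τ; rw [hermT']; ring
  rwa [hEq]

lemma contDiff_sin_node (c : ℝ) : ContDiff ℝ ω (fun τ : ℝ => Real.sin ((τ - c) / 2)) :=
  Real.contDiff_sin.comp ((contDiff_id.sub contDiff_const).div_const 2)

lemma contDiff_hermP : ContDiff ℝ ω (hermP N a s) :=
  contDiff_prod (fun t _ => contDiff_sin_node (a t))

lemma contDiff_hermT : ContDiff ℝ ω (hermT N a s) :=
  (contDiff_const.mul contDiff_hermP).pow 2

end

open Metric InnerProductSpace Finset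
open scoped RealInnerProductSpace

variable {E : Type*} [NormedAddCommGroup E] [InnerProductSpace ℝ E]

lemma exists_inner_ne_zero (S : Finset E) (hS : ∀ w ∈ S, w ≠ 0) :
    ∃ u : E, ∀ w ∈ S, ⟪u, w⟫ ≠ 0 := by
  classical
  induction S using Finset.induction with
  | empty => exact ⟨0, by simp⟩
  | insert w₀ S hnot ih =>
    obtain ⟨u, hu⟩ := ih (fun w hw => hS w (Finset.mem_insert_of_mem hw))
    have hw₀ : w₀ ≠ 0 := hS w₀ (Finset.mem_insert_self _ _)
    set B : E → Set ℝ := fun w => {t : ℝ | ⟪u, w⟫ + t * ⟪w₀, w⟫ = 0} with hB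
    have hfin : ∀ w ∈ insert w₀ S, (B w).Finite := by
      intro w hw
      by_cases hc : ⟪w₀, w⟫ = 0
      · have hw' : w ∈ S := by
          rcases Finset.mem_insert.1 hw with h | h
          · exfalso; rw [h] at hc
            exact hw₀ (inner_self_eq_zero.1 hc)
          · exact h
        have : B w = ∅ := by
          ext t
          simp only [hB, Set.mem_setOf_eq, Set.mem_empty_iff_false, iff_false]
          rw [hc, mul_zero, add_zero]
          exact hu w hw'
        rw [this]; exact Set.finite_empty
      · apply Set.Subsingleton.finite
        intro t₁ ht₁ t₂ ht₂
        simp only [hB, Set.mem_setOf_eq] at ht₁ ht₂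
        have : t₁ * ⟪w₀, w⟫ = t₂ * ⟪w₀, w⟫ := by linarith
        exact mul_right_cancel₀ hc this
    have hUfin : (⋃ w ∈ (insert w₀ S : Finset E), B w).Finite :=
      Set.Finite.biUnion (Finset.finite_toSet _) (fun w hw => hfin w (by simpa using hw))
    obtain ⟨t, ht⟩ := (hUfin.infinite_compl).nonempty
    refine ⟨u + t • w₀, fun w hw => ?_⟩
    have htw : t ∉ B w := fun hmem => ht (Set.mem_iUnion₂.2 ⟨w, by simpa using hw, hmem⟩)
    simp only [hB, Set.mem_setOf_eq] at htw
    rwa [inner_add_left, real_inner_smul_left]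

lemma exists_separating_functional (N : ℕ) (x : ℕ → E)
    (hdist : ∀ i < N, ∀ j < N, x i = x j → i = j) :
    ∃ u : E, ∀ i < N, ∀ j < N, i ≠ j → ⟪u, x i⟫ ≠ ⟪u, x j⟫ := by
  classical
  set S : Finset E := ((Finset.range N ×ˢ Finset.range N).filter
    (fun p => p.1 ≠ p.2)).image (fun p => x p.1 - x p.2) with hSdef
  have hS : ∀ w ∈ S, w ≠ 0 := by
    intro w hw
    simp only [hSdef, Finset.mem_image, Finset.mem_filter, Finset.mem_product,
      Finset.mem_range] at hw
    obtain ⟨⟨i, j⟩, ⟨⟨hi, hj⟩, hij⟩, rfl⟩ := hw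
    rw [sub_ne_zero]
    exact fun h => hij (hdist i hi j hj h)
  obtain ⟨u, hu⟩ := exists_inner_ne_zero S hS
  refine ⟨u, fun i hi j hj hij h => ?_⟩
  have hmem : x i - x j ∈ S := by
    simp only [hSdef, Finset.mem_image, Finset.mem_filter, Finset.mem_product,
      Finset.mem_range]
    exact ⟨(i, j), ⟨⟨hi, hj⟩, hij⟩, rfl⟩
  exact hu _ hmem (by rw [inner_sub_right, h, sub_self])

open Metric InnerProductSpace Finset Function
open scoped RealInnerProductSpace ContDiff

/-- any finite sequence of iterates `x₀, …, x_N` in `ℝᵈ` with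
`x₀, …, x_{N−1}` pairwise distinct is realized as the gradient-descent
trajectory (with step size `η`) of some smooth function with Lipschitz
gradient. -/
theorem exists_smooth_function_realizing_gd_path
    (d : ℕ) (hd : 1 ≤ d) (η : ℝ) (hη : 0 < η) (N : ℕ) (hN : 1 ≤ N)
    (x : ℕ → EuclideanSpace ℝ (Fin d))
    (hdist : ∀ i < N, ∀ j < N, x i = x j → i = j) :
    ∃ f : EuclideanSpace ℝ (Fin d) → ℝ, ContDiff ℝ (⊤ : ℕ∞) f ∧
      (∃ C : ℝ, ∀ a b, ‖gradient f a - gradient f b‖ ≤ C * ‖a - b‖) ∧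
      ∀ z : ℕ → EuclideanSpace ℝ (Fin d), z 0 = x 0 →
        (∀ t, z (t + 1) = z t - η • gradient f (z t)) →
        ∀ t ≤ N, z t = x t := by
  classical
  obtain ⟨u₀, hu₀⟩ := exists_separating_functional N x hdist
  -- rescale so that node differences are less than π
  set A : ℝ := ∑ i ∈ Finset.range N, |⟪u₀, x i⟫| with hAdef
  have hA0 : 0 ≤ A := Finset.sum_nonneg fun i _ => abs_nonneg _
  have hAi : ∀ i < N, |⟪u₀, x i⟫| ≤ A := by
    intro i hi
    rw [hAdef]
    exact Finset.single_le_sum (f := fun j => |⟪u₀, x j⟫|)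
      (fun j _ => abs_nonneg _) (Finset.mem_range.2 hi)
  set κ : ℝ := Real.pi / (2 * A + 1) with hκdef
  have hκ0 : 0 < κ := div_pos Real.pi_pos (by linarith)
  set u : EuclideanSpace ℝ (Fin d) := κ • u₀ with hu
  set a : ℕ → ℝ := fun i => ⟪u, x i⟫ with ha
  have hak : ∀ i, a i = κ * ⟪u₀, x i⟫ := by
    intro i
    show ⟪u, x i⟫ = κ * ⟪u₀, x i⟫
    rw [hu, real_inner_smul_left]
  have ha_inj : ∀ i < N, ∀ j < N, i ≠ j → a i ≠ a j := by
    intro i hi j hj hij h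
    apply hu₀ i hi j hj hij
    rw [hak i, hak j] at h
    exact mul_left_cancel₀ (ne_of_gt hκ0) h
  have hbound : ∀ i < N, ∀ j < N, |a i - a j| < Real.pi := by
    intro i hi j hj
    have h1 : a i - a j = κ * (⟪u₀, x i⟫ - ⟪u₀, x j⟫) := by
      rw [hak i, hak j]; ring
    rw [h1, abs_mul, abs_of_pos hκ0]
    have h2 : |⟪u₀, x i⟫ - ⟪u₀, x j⟫| ≤ 2 * A := by
      calc |⟪u₀, x i⟫ - ⟪u₀, x j⟫| ≤ |⟪u₀, x i⟫| + |⟪u₀, x j⟫| := abs_sub _ _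
        _ ≤ A + A := add_le_add (hAi i hi) (hAi j hj)
        _ = 2 * A := by ring
    calc κ * |⟪u₀, x i⟫ - ⟪u₀, x j⟫| ≤ κ * (2 * A) := by
          exact mul_le_mul_of_nonneg_left h2 hκ0.le
      _ = Real.pi * (2 * A) / (2 * A + 1) := by rw [hκdef]; ring
      _ < Real.pi := by
          rw [div_lt_iff₀ (by linarith)]
          nlinarith [Real.pi_pos]
  have hsep : ∀ s < N, ∀ t < N, s ≠ t → Real.sin ((a s - a t) / 2) ≠ 0 := by
    intro s hs t ht hst h
    have hb := hbound s hs t ht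
    have h1 : -Real.pi < (a s - a t) / 2 := by
      rw [abs_lt] at hb
      linarith [Real.pi_pos]
    have h2 : (a s - a t) / 2 < Real.pi := by
      rw [abs_lt] at hb
      linarith [Real.pi_pos]
    have := (Real.sin_eq_zero_iff_of_lt_of_lt h1 h2).1 h
    exact ha_inj s hs t ht hst (by linarith)
  have hPne : ∀ s < N, hermP N a s (a s) ≠ 0 := by
    intro s hs
    rw [hermP, Finset.prod_ne_zero_iff]
    intro t ht
    rw [Finset.mem_erase, Finset.mem_range] at ht
    exact hsep s hs t ht.2 (fun h => ht.1 h.symm)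
  -- the construction
  set v : ℕ → EuclideanSpace ℝ (Fin d) := fun t => η⁻¹ • (x t - x (t + 1)) with hv
  set c : ℕ → ℝ := fun s => ⟪v s, x s⟫ with hc
  set f : EuclideanSpace ℝ (Fin d) → ℝ :=
    fun y => ∑ s ∈ Finset.range N, Real.sin (⟪v s, y⟫ - c s) * hermT N a s ⟪u, y⟫ with hf
  set G : EuclideanSpace ℝ (Fin d) → EuclideanSpace ℝ (Fin d) := fun y =>
    ∑ s ∈ Finset.range N,
      ((Real.cos (⟪v s, y⟫ - c s) * hermT N a s ⟪u, y⟫) • v s +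
        (Real.sin (⟪v s, y⟫ - c s) * hermT' N a s ⟪u, y⟫) • u) with hG
  -- smoothness
  have hsmooth : ContDiff ℝ (⊤ : ℕ∞) f := by
    apply ContDiff.sum
    intro s _
    have h1 : ContDiff ℝ ω (fun y : EuclideanSpace ℝ (Fin d) => ⟪v s, y⟫ - c s) :=
      (innerSL ℝ (v s)).contDiff.sub contDiff_const
    have h2 : ContDiff ℝ ω (fun y : EuclideanSpace ℝ (Fin d) => ⟪u, y⟫) :=
      (innerSL ℝ u).contDiff
    exact ((Real.contDiff_sin.comp h1).mul (contDiff_hermT.comp h2)).of_le le_top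
  -- gradient computation
  have hGrad : ∀ y, HasGradientAt f (G y) y := by
    intro y
    have hD : HasFDerivAt f
        (∑ s ∈ Finset.range N,
          (Real.sin (⟪v s, y⟫ - c s) • (hermT' N a s ⟪u, y⟫ • innerSL ℝ u) +
            hermT N a s ⟪u, y⟫ •
              (Real.cos (⟪v s, y⟫ - c s) • innerSL ℝ (v s)))) y := by
      apply HasFDerivAt.fun_sum
      intro s _
      have hA1 : HasFDerivAt (fun y : EuclideanSpace ℝ (Fin d) => ⟪v s, y⟫ - c s)
          (innerSL ℝ (v s)) y := (innerSL ℝ (v s)).hasFDerivAt.sub_const _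
      have hc1 : HasFDerivAt (fun y : EuclideanSpace ℝ (Fin d) => Real.sin (⟪v s, y⟫ - c s))
          (Real.cos (⟪v s, y⟫ - c s) • innerSL ℝ (v s)) y :=
        (Real.hasDerivAt_sin _).comp_hasFDerivAt y hA1
      have hd1 : HasFDerivAt (fun y : EuclideanSpace ℝ (Fin d) => hermT N a s ⟪u, y⟫)
          (hermT' N a s ⟪u, y⟫ • innerSL ℝ u) y :=
        (hermT_hasDerivAt _).comp_hasFDerivAt y (innerSL ℝ u).hasFDerivAt
      exact hc1.mul hd1
    have hg := hD.hasGradientAt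
    have heq : (toDual ℝ (EuclideanSpace ℝ (Fin d))).symm
        (∑ s ∈ Finset.range N,
          (Real.sin (⟪v s, y⟫ - c s) • (hermT' N a s ⟪u, y⟫ • innerSL ℝ u) +
            hermT N a s ⟪u, y⟫ •
              (Real.cos (⟪v s, y⟫ - c s) • innerSL ℝ (v s)))) = G y := by
      rw [show ∀ (L : (EuclideanSpace ℝ (Fin d)) →L[ℝ] ℝ) (w : EuclideanSpace ℝ (Fin d)),
          ((toDual ℝ (EuclideanSpace ℝ (Fin d))).symm L = w ↔
            L = toDual ℝ (EuclideanSpace ℝ (Fin d)) w) from fun L w =>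
          ⟨fun h => by rw [← h, LinearIsometryEquiv.apply_symm_apply],
           fun h => by rw [h, LinearIsometryEquiv.symm_apply_apply]⟩]
      apply ContinuousLinearMap.ext
      intro w
      simp only [ContinuousLinearMap.sum_apply, ContinuousLinearMap.add_apply,
        ContinuousLinearMap.smul_apply, innerSL_apply_apply, smul_eq_mul, toDual_apply_apply,
        hG, sum_inner, inner_add_left, real_inner_smul_left]
      apply Finset.sum_congr rfl
      intro s _
      ring
    rwa [heq] at hg
  have hgradf : ∀ y, gradient f y = G y := fun y => (hGrad y).gradient
  -- gradient at the nodes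
  have hGx : ∀ t < N, G (x t) = v t := by
    intro t ht
    show (∑ s ∈ Finset.range N,
      ((Real.cos (⟪v s, x t⟫ - c s) * hermT N a s ⟪u, x t⟫) • v s +
        (Real.sin (⟪v s, x t⟫ - c s) * hermT' N a s ⟪u, x t⟫) • u)) = v t
    rw [Finset.sum_eq_single t]
    · have h1 : hermT N a t ⟪u, x t⟫ = 1 := hermT_self (hPne t ht)
      have h2 : ⟪v t, x t⟫ - c t = 0 := sub_self _
      rw [h2, h1, Real.cos_zero, Real.sin_zero, one_mul, one_smul, zero_mul, zero_smul,
        add_zero]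
    · intro s hs hst
      rw [Finset.mem_range] at hs
      have hmem : t ∈ (Finset.range N).erase s :=
        Finset.mem_erase.2 ⟨fun h => hst h.symm, Finset.mem_range.2 ht⟩
      have h1 : hermT N a s ⟪u, x t⟫ = 0 := hermT_eq_zero hmem
      have h2 : hermT' N a s ⟪u, x t⟫ = 0 := hermT'_eq_zero hmem
      rw [h1, h2, mul_zero, mul_zero, zero_smul, zero_smul, add_zero]
    · intro h
      exact absurd (Finset.mem_range.2 ht) h
  -- Lipschitz gradient
  have hlip : ∃ C : ℝ, ∀ p q : EuclideanSpace ℝ (Fin d),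
      ‖G p - G q‖ ≤ C * ‖p - q‖ := by
    have hterm : ∀ s : ℕ, ∃ C, 0 ≤ C ∧ ∀ p q : EuclideanSpace ℝ (Fin d),
        ‖((Real.cos (⟪v s, p⟫ - c s) * hermT N a s ⟪u, p⟫) • v s +
            (Real.sin (⟪v s, p⟫ - c s) * hermT' N a s ⟪u, p⟫) • u) -
          ((Real.cos (⟪v s, q⟫ - c s) * hermT N a s ⟪u, q⟫) • v s +
            (Real.sin (⟪v s, q⟫ - c s) * hermT' N a s ⟪u, q⟫) • u)‖ ≤ C * ‖p - q‖ := by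
      intro s
      have hlip1 : ∀ p q : EuclideanSpace ℝ (Fin d),
          dist (⟪v s, p⟫ - c s) (⟪v s, q⟫ - c s) ≤ ‖v s‖ * dist p q := by
        intro p q
        rw [Real.dist_eq, dist_eq_norm]
        have : ⟪v s, p⟫ - c s - (⟪v s, q⟫ - c s) = ⟪v s, p - q⟫ := by
          rw [inner_sub_right]; ring
        rw [this]
        exact abs_real_inner_le_norm _ _
      have hlip2 : ∀ p q : EuclideanSpace ℝ (Fin d),
          dist (⟪u, p⟫ : ℝ) ⟪u, q⟫ ≤ ‖u‖ * dist p q := by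
        intro p q
        rw [Real.dist_eq, dist_eq_norm]
        rw [← inner_sub_right]
        exact abs_real_inner_le_norm _ _
      have hn1 : NiceBL (fun y : EuclideanSpace ℝ (Fin d) =>
          Real.cos (⟪v s, y⟫ - c s) * hermT N a s ⟪u, y⟫) :=
        (niceBL_cos.comp_lip _ ‖v s‖ (norm_nonneg _) hlip1).mul
          (niceBL_hermT.comp_lip _ ‖u‖ (norm_nonneg _) hlip2)
      have hn2 : NiceBL (fun y : EuclideanSpace ℝ (Fin d) =>
          Real.sin (⟪v s, y⟫ - c s) * hermT' N a s ⟪u, y⟫) :=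
        (niceBL_sin.comp_lip _ ‖v s‖ (norm_nonneg _) hlip1).mul
          (niceBL_hermT'.comp_lip _ ‖u‖ (norm_nonneg _) hlip2)
      obtain ⟨M₁, L₁, hM₁, hL₁, hb₁, hl₁⟩ := hn1
      obtain ⟨M₂, L₂, hM₂, hL₂, hb₂, hl₂⟩ := hn2
      refine ⟨L₁ * ‖v s‖ + L₂ * ‖u‖, by positivity, fun p q => ?_⟩
      set α : EuclideanSpace ℝ (Fin d) → ℝ := fun y =>
        Real.cos (⟪v s, y⟫ - c s) * hermT N a s ⟪u, y⟫
      set β : EuclideanSpace ℝ (Fin d) → ℝ := fun y =>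
        Real.sin (⟪v s, y⟫ - c s) * hermT' N a s ⟪u, y⟫
      have hre : α p • v s + β p • u - (α q • v s + β q • u)
          = (α p - α q) • v s + (β p - β q) • u := by
        rw [sub_smul, sub_smul]; abel
      rw [hre]
      calc ‖(α p - α q) • v s + (β p - β q) • u‖
          ≤ ‖(α p - α q) • v s‖ + ‖(β p - β q) • u‖ := norm_add_le _ _
        _ = |α p - α q| * ‖v s‖ + |β p - β q| * ‖u‖ := by
            rw [norm_smul (α p - α q) (v s), norm_smul (β p - β q) u,
              Real.norm_eq_abs, Real.norm_eq_abs]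
        _ ≤ (L₁ * dist p q) * ‖v s‖ + (L₂ * dist p q) * ‖u‖ := by
            gcongr
            · exact hl₁ p q
            · exact hl₂ p q
        _ = (L₁ * ‖v s‖ + L₂ * ‖u‖) * ‖p - q‖ := by
            rw [dist_eq_norm]; ring
    choose Cs hCs0 hCs using hterm
    refine ⟨∑ s ∈ Finset.range N, Cs s, fun p q => ?_⟩
    show ‖(∑ s ∈ Finset.range N,
      ((Real.cos (⟪v s, p⟫ - c s) * hermT N a s ⟪u, p⟫) • v s +
        (Real.sin (⟪v s, p⟫ - c s) * hermT' N a s ⟪u, p⟫) • u)) -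
      (∑ s ∈ Finset.range N,
      ((Real.cos (⟪v s, q⟫ - c s) * hermT N a s ⟪u, q⟫) • v s +
        (Real.sin (⟪v s, q⟫ - c s) * hermT' N a s ⟪u, q⟫) • u))‖
      ≤ (∑ s ∈ Finset.range N, Cs s) * ‖p - q‖
    rw [← Finset.sum_sub_distrib]
    calc ‖∑ s ∈ Finset.range N, _‖ ≤ ∑ s ∈ Finset.range N,
          ‖((Real.cos (⟪v s, p⟫ - c s) * hermT N a s ⟪u, p⟫) • v s +
            (Real.sin (⟪v s, p⟫ - c s) * hermT' N a s ⟪u, p⟫) • u) -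
          ((Real.cos (⟪v s, q⟫ - c s) * hermT N a s ⟪u, q⟫) • v s +
            (Real.sin (⟪v s, q⟫ - c s) * hermT' N a s ⟪u, q⟫) • u)‖ := norm_sum_le _ _
      _ ≤ ∑ s ∈ Finset.range N, Cs s * ‖p - q‖ := Finset.sum_le_sum fun s _ => hCs s p q
      _ = (∑ s ∈ Finset.range N, Cs s) * ‖p - q‖ := by rw [Finset.sum_mul]
  refine ⟨f, hsmooth, ?_, ?_⟩
  · obtain ⟨C, hC⟩ := hlip
    exact ⟨C, fun p q => by rw [hgradf, hgradf]; exact hC p q⟩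
  · intro z hz0 hzrec t htN
    induction t with
    | zero => exact hz0
    | succ t ih =>
      have htN' : t < N := htN
      have ih' := ih (le_of_lt htN')
      rw [hzrec t, ih', hgradf, hGx t htN', hv]
      simp only
      rw [smul_smul, mul_inv_cancel₀ (ne_of_gt hη), one_smul]
      abel
end

section
/- Let d ≥ 1, η > 0, x₀ ∈ ℝᵈ, N ≥ 1, and let U₁, …, U_N ⊆ ℝᵈ be nonempty open sets. Then there exists an infinitely differentiable function f : ℝᵈ → ℝ with Lipschitz gradient such that the gradient-descent iterates z₀ = x₀, z_{t+1} = z_t − η∇f(z_t) satisfy z_t ∈ U_t for every t = 1, …, N. -/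
open Set Metric InnerProductSpace Finset Polynomial
open scoped RealInnerProductSpace Real

section poly

lemma exists_antideriv (Q : Polynomial ℝ) : ∃ P : Polynomial ℝ, P.derivative = Q := by
  induction Q using Polynomial.induction_on' with
  | add p q hp hq =>
    obtain ⟨P1, h1⟩ := hp; obtain ⟨P2, h2⟩ := hq
    exact ⟨P1 + P2, by simp [h1, h2]⟩
  | monomial n a =>
    refine ⟨Polynomial.monomial (n + 1) (a / (n + 1)), ?_⟩
    rw [Polynomial.derivative_monomial]
    simp only [Nat.add_sub_cancel, Nat.cast_add, Nat.cast_one]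
    congr 1
    field_simp

lemma contDiff_polyeval (n : WithTop ℕ∞) (P : Polynomial ℝ) :
    ContDiff ℝ n (fun y : ℝ => P.eval y) := by
  induction P using Polynomial.induction_on' with
  | add p q hp hq => simpa [Polynomial.eval_add] using hp.add hq
  | monomial k a =>
    simpa [Polynomial.eval_monomial] using (contDiff_const (c := a)).mul (contDiff_id.pow k)

end poly

/-- One-dimensional interpolation: an analytic function with Lipschitz derivative
taking prescribed derivative values at finitely many distinct points. -/
lemma oneDim (N : ℕ) (hN : 1 ≤ N) (s : ℕ → ℝ)
    (hs : ∀ i j, i < N → j < N → i ≠ j → s i ≠ s j) (w : ℕ → ℝ) :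
    ∃ h g : ℝ → ℝ, ∃ K : ℝ, 0 ≤ K ∧ ContDiff ℝ (⊤ : ℕ∞) h ∧ (∀ x, HasDerivAt h (g x) x) ∧
      (∀ a b, |g a - g b| ≤ K * |a - b|) ∧ ∀ t, t < N → g (s t) = w t := by
  classical
  have hne : (Finset.range N).Nonempty := Finset.nonempty_range_iff.mpr (by omega)
  set M : ℝ := 1 + (Finset.range N).sup' hne (fun t => |s t|) with hM
  have hM1 : 1 ≤ M := by
    have h0 : |s 0| ≤ (Finset.range N).sup' hne (fun t => |s t|) :=
      Finset.le_sup' (fun t => |s t|) (Finset.mem_range.mpr hN)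
    have := abs_nonneg (s 0)
    simp only [hM]; linarith
  have hMpos : 0 < M := by linarith
  set c : ℝ := π / (2 * M) with hc
  have hcpos : 0 < c := div_pos Real.pi_pos (by linarith)
  have hcM : c * M = π / 2 := by
    rw [hc]; field_simp
  have hangle : ∀ t, t < N → |c * s t| < π / 2 := by
    intro t ht
    have h1 : |s t| ≤ M - 1 := by
      have := Finset.le_sup' (fun t => |s t|) (Finset.mem_range.mpr ht)
      simp only [hM]; linarith
    have : |c * s t| = c * |s t| := by rw [abs_mul, abs_of_pos hcpos]
    rw [this, ← hcM]
    nlinarith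
  set y : ℕ → ℝ := fun t => Real.sin (c * s t) with hy
  have hyinj : Set.InjOn y ↑(Finset.range N) := by
    intro i hi j hj hij
    simp only [Finset.coe_range, Set.mem_Iio] at hi hj
    by_contra hne'
    have h1 : c * s i ∈ Set.Icc (-(π/2)) (π/2) := by
      have := hangle i hi; constructor <;> [linarith [abs_lt.mp this]; linarith [abs_lt.mp this]]
    have h2 : c * s j ∈ Set.Icc (-(π/2)) (π/2) := by
      have := hangle j hj; constructor <;> [linarith [abs_lt.mp this]; linarith [abs_lt.mp this]]
    have := Real.injOn_sin h1 h2 hij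
    exact hs i j hi hj hne' (mul_left_cancel₀ (ne_of_gt hcpos) this)
  set r : ℕ → ℝ := fun t => w t / (Real.cos (c * s t) * c) with hr
  set Q : Polynomial ℝ := Lagrange.interpolate (Finset.range N) y r with hQ
  obtain ⟨P, hP⟩ := exists_antideriv Q
  refine ⟨fun x => P.eval (Real.sin (c * x)),
    fun x => Q.eval (Real.sin (c * x)) * (Real.cos (c * x) * c), ?_⟩
  have hlin : ∀ x : ℝ, HasDerivAt (fun x : ℝ => c * x) c x := by
    intro x; simpa using (hasDerivAt_id x).const_mul c
  have hsin : ∀ x : ℝ, HasDerivAt (fun x : ℝ => Real.sin (c * x))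
      (Real.cos (c * x) * c) x := by
    intro x
    exact (Real.hasDerivAt_sin (c * x)).comp x (hlin x)
  have hcosd : ∀ x : ℝ, HasDerivAt (fun x : ℝ => Real.cos (c * x) * c)
      (-Real.sin (c * x) * c * c) x := by
    intro x
    exact ((Real.hasDerivAt_cos (c * x)).comp x (hlin x)).mul_const c
  have hQd : ∀ x : ℝ, HasDerivAt (fun x : ℝ => Q.eval (Real.sin (c * x)))
      (Q.derivative.eval (Real.sin (c * x)) * (Real.cos (c * x) * c)) x := by
    intro x
    exact (Q.hasDerivAt (Real.sin (c * x))).comp x (hsin x)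
  -- the derivative of g
  set g' : ℝ → ℝ := fun x =>
    Q.derivative.eval (Real.sin (c * x)) * (Real.cos (c * x) * c) * (Real.cos (c * x) * c)
      + Q.eval (Real.sin (c * x)) * (-Real.sin (c * x) * c * c) with hg'
  have hgd : ∀ x : ℝ, HasDerivAt
      (fun x => Q.eval (Real.sin (c * x)) * (Real.cos (c * x) * c)) (g' x) x := by
    intro x
    exact (hQd x).mul (hcosd x)
  -- bounds
  obtain ⟨B1, hB1⟩ := (isCompact_Icc (a := (-1:ℝ)) (b := 1)).exists_bound_of_continuousOn
    (Continuous.continuousOn (Polynomial.continuous Q))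
  obtain ⟨B2, hB2⟩ := (isCompact_Icc (a := (-1:ℝ)) (b := 1)).exists_bound_of_continuousOn
    (Continuous.continuousOn (Polynomial.continuous Q.derivative))
  set K : ℝ := (|B1| + |B2|) * (c * c) with hK
  have hsinIcc : ∀ x : ℝ, Real.sin (c * x) ∈ Set.Icc (-1:ℝ) 1 := by
    intro x; exact ⟨Real.neg_one_le_sin _, Real.sin_le_one _⟩
  have hKbound : ∀ x : ℝ, ‖g' x‖ ≤ K := by
    intro x
    have b1 : |Q.eval (Real.sin (c * x))| ≤ |B1| :=
      le_trans (by simpa using hB1 _ (hsinIcc x)) (le_abs_self B1)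
    have b2 : |Q.derivative.eval (Real.sin (c * x))| ≤ |B2| :=
      le_trans (by simpa using hB2 _ (hsinIcc x)) (le_abs_self B2)
    have hcos1 : |Real.cos (c * x)| ≤ 1 := Real.abs_cos_le_one _
    have hsin1 : |Real.sin (c * x)| ≤ 1 := Real.abs_sin_le_one _
    rw [Real.norm_eq_abs, hg']
    have hc0 : (0:ℝ) ≤ c := le_of_lt hcpos
    have hcc : |Real.cos (c * x) * c| ≤ c := by
      rw [abs_mul, abs_of_pos hcpos]
      nlinarith [abs_nonneg (Real.cos (c * x))]
    have hsc : |(-Real.sin (c * x)) * c * c| ≤ c * c := by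
      rw [abs_mul, abs_mul, abs_neg, abs_of_pos hcpos]
      nlinarith [abs_nonneg (Real.sin (c * x))]
    have h1 : |Q.derivative.eval (Real.sin (c * x)) * (Real.cos (c * x) * c) *
        (Real.cos (c * x) * c)| ≤ |B2| * (c * c) := by
      rw [abs_mul, abs_mul]
      calc |Q.derivative.eval (Real.sin (c * x))| * |Real.cos (c * x) * c| *
            |Real.cos (c * x) * c|
          ≤ |B2| * c * c := by
            apply mul_le_mul (mul_le_mul b2 hcc (abs_nonneg _) (abs_nonneg _)) hcc
              (abs_nonneg _) (by positivity)
        _ = |B2| * (c * c) := by ring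
    have h2 : |Q.eval (Real.sin (c * x)) * (-Real.sin (c * x) * c * c)| ≤ |B1| * (c * c) := by
      rw [abs_mul]
      exact mul_le_mul b1 hsc (abs_nonneg _) (abs_nonneg _)
    calc |_ + _| ≤ _ + _ := abs_add_le _ _
      _ ≤ |B2| * (c * c) + |B1| * (c * c) := add_le_add h1 h2
      _ = K := by rw [hK]; ring
  refine ⟨K, by positivity, ?_, ?_, ?_, ?_⟩
  · exact (contDiff_polyeval (⊤ : ℕ∞) P).comp
      (Real.contDiff_sin.comp ((contDiff_const (c := c)).mul contDiff_id))
  · intro x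
    have h3 := (P.hasDerivAt (Real.sin (c * x))).comp x (hsin x)
    rw [hP] at h3
    exact h3
  · intro a b
    have := convex_univ.norm_image_sub_le_of_norm_hasDerivWithin_le
      (f := fun x => Q.eval (Real.sin (c * x)) * (Real.cos (c * x) * c)) (f' := g')
      (fun x _ => (hgd x).hasDerivWithinAt) (fun x _ => hKbound x)
      (Set.mem_univ b) (Set.mem_univ a)
    simpa [Real.norm_eq_abs] using this
  · intro t ht
    have hnode : Polynomial.eval (y t) Q = r t :=
      Lagrange.eval_interpolate_at_node r hyinj (Finset.mem_range.mpr ht)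
    have hcospos : 0 < Real.cos (c * s t) := by
      have := abs_lt.mp (hangle t ht)
      exact Real.cos_pos_of_mem_Ioo ⟨this.1, this.2⟩
    show Polynomial.eval (Real.sin (c * s t)) Q * (Real.cos (c * s t) * c) = w t
    have : Polynomial.eval (Real.sin (c * s t)) Q = r t := hnode
    rw [this, hr]
    field_simp

/-- Choose points with `p 0 = x₀`, `p t ∈ U t`, and coordinatewise distinctness. -/
lemma exists_points_coord {d : ℕ} (hd : 1 ≤ d) (x₀ : EuclideanSpace ℝ (Fin d)) (N : ℕ)
    (U : ℕ → Set (EuclideanSpace ℝ (Fin d)))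
    (hUopen : ∀ t, 1 ≤ t → t ≤ N → IsOpen (U t))
    (hUne : ∀ t, 1 ≤ t → t ≤ N → (U t).Nonempty) :
    ∃ p : ℕ → EuclideanSpace ℝ (Fin d), p 0 = x₀ ∧
      (∀ t, 1 ≤ t → t ≤ N → p t ∈ U t) ∧
      ∀ i j, i ≤ N → j ≤ N → i ≠ j → ∀ k, p i k ≠ p j k := by
  classical
  have key : ∀ n, n ≤ N → ∃ p : ℕ → EuclideanSpace ℝ (Fin d), p 0 = x₀ ∧
      (∀ t, 1 ≤ t → t ≤ n → p t ∈ U t) ∧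
      ∀ i j, i ≤ n → j ≤ n → i ≠ j → ∀ k, p i k ≠ p j k := by
    intro n
    induction n with
    | zero =>
      intro _
      exact ⟨fun _ => x₀, rfl, fun t ht ht' => by omega, fun i j hi hj hij => by omega⟩
    | succ n ih =>
      intro hn
      obtain ⟨p, h0, hmem, hinj⟩ := ih (Nat.le_of_succ_le hn)
      obtain ⟨yy, hyy⟩ := hUne (n + 1) (by omega) hn
      obtain ⟨rad, hradpos, hball⟩ :=
        Metric.isOpen_iff.mp (hUopen (n + 1) (by omega) hn) yy hyy
      set ones : EuclideanSpace ℝ (Fin d) := WithLp.toLp 2 (fun _ => 1) with hones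
      set δ : ℝ := rad / (‖ones‖ + 1) with hδ
      have hnorm0 : (0:ℝ) ≤ ‖ones‖ := norm_nonneg _
      have hδpos : 0 < δ := div_pos hradpos (by linarith)
      set bad : Set ℝ := (fun q : Fin d × ℕ => p q.2 q.1 - yy q.1) '' (Set.univ ×ˢ Set.Iic n)
        with hbad
      have hbadfin : bad.Finite := (Set.finite_univ.prod (Set.finite_Iic n)).image _
      obtain ⟨cc, hccIoo, hccbad⟩ := ((Set.Ioo_infinite hδpos).diff hbadfin).nonempty
      set q : EuclideanSpace ℝ (Fin d) := yy + cc • ones with hq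
      have hccpos : 0 < cc := hccIoo.1
      have hccδ : cc < δ := hccIoo.2
      have hqU : q ∈ U (n + 1) := by
        apply hball
        rw [Metric.mem_ball, dist_eq_norm]
        have h1 : q - yy = cc • ones := by rw [hq]; abel
        rw [h1, norm_smul, Real.norm_eq_abs, abs_of_pos hccpos]
        have h2 : cc * ‖ones‖ < δ * (‖ones‖ + 1) := by nlinarith
        have h3 : δ * (‖ones‖ + 1) = rad := by
          rw [hδ]; field_simp
        linarith
      have hqcoord : ∀ k : Fin d, q k = yy k + cc := by
        intro k
        rw [hq]
        show yy k + cc * (1:ℝ) = yy k + cc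
        ring
      have hqne : ∀ k : Fin d, ∀ m, m ≤ n → q k ≠ p m k := by
        intro k m hm h
        apply hccbad
        rw [hbad]
        refine ⟨(k, m), ⟨Set.mem_univ _, hm⟩, ?_⟩
        have := hqcoord k
        rw [h] at this
        simp only
        linarith
      refine ⟨Function.update p (n + 1) q, ?_, ?_, ?_⟩
      · rw [Function.update_of_ne (by omega) _ _, h0]
      · intro t ht ht'
        rcases eq_or_lt_of_le ht' with h | h
        · rw [h, Function.update_self]; exact hqU
        · rw [Function.update_of_ne (by omega) _ _]
          exact hmem t ht (by omega)
      · intro i j hi hj hij k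
        rcases eq_or_lt_of_le hi with h1 | h1 <;> rcases eq_or_lt_of_le hj with h2 | h2
        · omega
        · rw [h1, Function.update_self, Function.update_of_ne (by omega)]
          exact hqne k j (by omega)
        · rw [h2, Function.update_self, Function.update_of_ne (by omega)]
          exact fun hcontra => hqne k i (by omega) hcontra.symm
        · rw [Function.update_of_ne (by omega), Function.update_of_ne (by omega)]
          exact hinj i j (by omega) (by omega) hij k
  exact key N le_rfl

/-- open-set reachability of gradient-descent paths.  For any
nonempty open sets `U₁, …, U_N ⊆ ℝᵈ` there is a smooth function with Lipschitz
gradient whose gradient-descent iterates from `x₀` (step size `η`) visit `U_t`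
at every step `t = 1, …, N`. -/
theorem exists_smooth_function_gd_path_hitting_open_sets
    (d : ℕ) (hd : 1 ≤ d) (η : ℝ) (hη : 0 < η)
    (x₀ : EuclideanSpace ℝ (Fin d)) (N : ℕ) (hN : 1 ≤ N)
    (U : ℕ → Set (EuclideanSpace ℝ (Fin d)))
    (hUopen : ∀ t, 1 ≤ t → t ≤ N → IsOpen (U t))
    (hUne : ∀ t, 1 ≤ t → t ≤ N → (U t).Nonempty) :
    ∃ f : EuclideanSpace ℝ (Fin d) → ℝ, ContDiff ℝ (⊤ : ℕ∞) f ∧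
      (∃ C : ℝ, ∀ a b, ‖gradient f a - gradient f b‖ ≤ C * ‖a - b‖) ∧
      ∀ z : ℕ → EuclideanSpace ℝ (Fin d), z 0 = x₀ →
        (∀ t, z (t + 1) = z t - η • gradient f (z t)) →
        ∀ t, 1 ≤ t → t ≤ N → z t ∈ U t := by
  classical
  obtain ⟨p, hp0, hpU, hpc⟩ := exists_points_coord hd x₀ N U hUopen hUne
  have key : ∀ j : Fin d, ∃ h g : ℝ → ℝ, ∃ K : ℝ, 0 ≤ K ∧ ContDiff ℝ (⊤ : ℕ∞) h ∧
      (∀ x, HasDerivAt h (g x) x) ∧ (∀ a b, |g a - g b| ≤ K * |a - b|) ∧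
      ∀ t, t < N → g (p t j) = η⁻¹ * (p t j - p (t + 1) j) := by
    intro j
    exact oneDim N hN (fun t => p t j)
      (fun i i' hi hi' hne => hpc i i' (by omega) (by omega) hne j)
      (fun t => η⁻¹ * (p t j - p (t + 1) j))
  choose h g K hK0 hsm hder hlip hval using key
  set f : EuclideanSpace ℝ (Fin d) → ℝ := fun x => ∑ j : Fin d, h j (x j) with hf
  set Gr : EuclideanSpace ℝ (Fin d) → EuclideanSpace ℝ (Fin d) :=
    fun x => WithLp.toLp 2 (fun j => g j (x j)) with hGr
  -- gradient computation
  have hGrad : ∀ x, HasGradientAt f (Gr x) x := by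
    intro x
    have hF : HasFDerivAt f
        (∑ j : Fin d, g j (x j) • (EuclideanSpace.proj j :
          EuclideanSpace ℝ (Fin d) →L[ℝ] ℝ)) x := by
      apply HasFDerivAt.fun_sum
      intro j _
      have hproj : HasFDerivAt (fun yv : EuclideanSpace ℝ (Fin d) => yv j)
          (EuclideanSpace.proj j : EuclideanSpace ℝ (Fin d) →L[ℝ] ℝ) x :=
        (EuclideanSpace.proj (𝕜 := ℝ) j).hasFDerivAt
      exact (hder j (x j)).comp_hasFDerivAt x hproj
    have heq : (toDual ℝ (EuclideanSpace ℝ (Fin d))) (Gr x) =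
        ∑ j : Fin d, g j (x j) • (EuclideanSpace.proj j :
          EuclideanSpace ℝ (Fin d) →L[ℝ] ℝ) := by
      apply ContinuousLinearMap.ext
      intro yv
      rw [toDual_apply_apply]
      simp only [ContinuousLinearMap.sum_apply, ContinuousLinearMap.smul_apply,
        PiLp.proj_apply, smul_eq_mul]
      rw [PiLp.inner_apply]
      simp [hGr, RCLike.inner_apply, mul_comm]
    exact hasGradientAt_iff_hasFDerivAt.mpr (heq ▸ hF)
  have hgrad_eq : ∀ x, gradient f x = Gr x := fun x => (hGrad x).gradient
  -- Lipschitz constant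
  set Kt : ℝ := ∑ j : Fin d, K j with hKt
  have hKt0 : 0 ≤ Kt := Finset.sum_nonneg (fun j _ => hK0 j)
  have hKj : ∀ j : Fin d, K j ≤ Kt :=
    fun j => Finset.single_le_sum (fun i _ => hK0 i) (Finset.mem_univ j)
  refine ⟨f, ?_, ⟨Kt, ?_⟩, ?_⟩
  · apply ContDiff.sum
    intro j _
    exact (hsm j).comp (EuclideanSpace.proj (𝕜 := ℝ) j : EuclideanSpace ℝ (Fin d) →L[ℝ] ℝ).contDiff
  · intro a b
    rw [hgrad_eq, hgrad_eq]
    have hterm : ∀ j : Fin d, ‖(Gr a - Gr b) j‖ ^ 2 ≤ Kt ^ 2 * ‖(a - b) j‖ ^ 2 := by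
      intro j
      have h1 : (Gr a - Gr b) j = g j (a j) - g j (b j) := by
        simp [hGr, PiLp.sub_apply]
      have h2 : (a - b) j = a j - b j := by simp [PiLp.sub_apply]
      rw [h1, h2, Real.norm_eq_abs, Real.norm_eq_abs]
      have h3 : |g j (a j) - g j (b j)| ≤ Kt * |a j - b j| :=
        le_trans (hlip j _ _) (mul_le_mul_of_nonneg_right (hKj j) (abs_nonneg _))
      calc |g j (a j) - g j (b j)| ^ 2 ≤ (Kt * |a j - b j|) ^ 2 :=
            pow_le_pow_left₀ (abs_nonneg _) h3 2
        _ = Kt ^ 2 * |a j - b j| ^ 2 := by ring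
    rw [EuclideanSpace.norm_eq, EuclideanSpace.norm_eq]
    have hsum : ∑ j : Fin d, ‖(Gr a - Gr b) j‖ ^ 2 ≤
        Kt ^ 2 * ∑ j : Fin d, ‖(a - b) j‖ ^ 2 := by
      rw [Finset.mul_sum]
      exact Finset.sum_le_sum (fun j _ => hterm j)
    calc Real.sqrt (∑ j : Fin d, ‖(Gr a - Gr b) j‖ ^ 2)
        ≤ Real.sqrt (Kt ^ 2 * ∑ j : Fin d, ‖(a - b) j‖ ^ 2) := Real.sqrt_le_sqrt hsum
      _ = Kt * Real.sqrt (∑ j : Fin d, ‖(a - b) j‖ ^ 2) := by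
          rw [Real.sqrt_mul (sq_nonneg Kt), Real.sqrt_sq hKt0]
  · intro z hz0 hzrec
    have hz : ∀ t, t ≤ N → z t = p t := by
      intro t
      induction t with
      | zero => intro _; rw [hz0, hp0]
      | succ n ih =>
        intro hn
        have hzn := ih (by omega)
        rw [hzrec n, hzn, hgrad_eq]
        ext k
        have h1 : (p n - η • Gr (p n)) k = p n k - η * g k (p n k) := by
          simp [hGr, PiLp.sub_apply, PiLp.smul_apply, smul_eq_mul]
        rw [h1, hval k n (by omega)]
        field_simp
        ring
    intro t ht htN
    rw [hz t htN]
    exact hpU t ht htN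
end
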